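/- Let d₁, d₂ be real numbers with 2 ≤ d₁ < d₂, and let r₋, r₊ be as defined. Then the interval integral from r₋ to r₊ of (1/π)·(d₁d₂/(d₁+d₂))·sqrt((x²−r₋²)·(r₊²−x²)) / ((d₁d₂−x²)·x) dx equals d₁/(d₁+d₂). -/

import Mathlib

/-!
Put `a = r₋²`, `b = r₊²`, `c = d₁d₂` and `s = √((u - a)(b - u))`. The substitution `u = x²`
turns the integral into `(1/2) ∫ₐᵇ s / ((c - u) u) du`, and the partial fraction identity
`c (u - a)(b - u) = c u (c - u) - a b (c - u) - (c - a)(c - b) u` splits `c s / ((c - u) u)` into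
`c / s - a b / (u s) - (c - a)(c - b) / ((c - u) s)`. Each of these three terms is the derivative of
the arcsine of a Möbius map taking `a, b` to `∓1` (with pole at `∞`, `0` and `c` respectively),
so over `[a, b]` each contributes `π` times its coefficient:
`∫ₐᵇ s / ((c - u) u) = π (c - √(ab) - √((c - a)(c - b))) / c`.
For the semi-regular edges `√(ab) = d₂ - d₁` and `√((c - a)(c - b)) = d₁d₂ - d₁ - d₂`.
-/

open Real Set

noncomputable def unitAffine (a b u : ℝ) : ℝ := (2 * u - a - b) / (b - a)

section UnitAffine

variable {a b : ℝ}

lemma unitAffine_left (h : a ≠ b) : unitAffine a b a = -1 := by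
  rw [unitAffine, div_eq_iff (sub_ne_zero.2 h.symm)]; ring

lemma unitAffine_right (h : a ≠ b) : unitAffine a b b = 1 := by
  rw [unitAffine, div_eq_one_iff_eq (sub_ne_zero.2 h.symm)]; ring

lemma one_sub_unitAffine_sq (h : a ≠ b) (u : ℝ) :
    1 - unitAffine a b u ^ 2 = (2 / (b - a)) ^ 2 * ((u - a) * (b - u)) := by
  have := sub_ne_zero.2 h.symm
  rw [unitAffine]; field_simp; ring

lemma continuous_arcsin_unitAffine : Continuous fun u => arcsin (unitAffine a b u) := by
  unfold unitAffine; fun_prop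

lemma hasDerivAt_arcsin_unitAffine {u : ℝ} (hu : u ∈ Ioo a b) :
    HasDerivAt (fun u => arcsin (unitAffine a b u)) (1 / √((u - a) * (b - u))) u := by
  have hab : 0 < b - a := by linarith [hu.1, hu.2]
  have hs : 0 < (u - a) * (b - u) := mul_pos (sub_pos.2 hu.1) (sub_pos.2 hu.2)
  have hsq := one_sub_unitAffine_sq (sub_pos.1 hab).ne u
  have hpos : 0 < 1 - unitAffine a b u ^ 2 := by rw [hsq]; positivity
  have hne : unitAffine a b u ≠ -1 ∧ unitAffine a b u ≠ 1 := by
    constructor <;> intro h <;> rw [h] at hpos <;> norm_num at hpos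
  have hL : HasDerivAt (unitAffine a b) (2 / (b - a)) u := by
    have := (((hasDerivAt_id' u).const_mul 2).sub_const a |>.sub_const b).div_const (b - a)
    rw [mul_one] at this
    exact this
  refine ((hasDerivAt_arcsin hne.1 hne.2).comp u hL).congr_deriv ?_
  rw [hsq, sqrt_mul (by positivity), sqrt_sq (by positivity)]
  field_simp

/-- `u ↦ unitAffine (b - p)⁻¹ (a - p)⁻¹ (u - p)⁻¹` is the Möbius map with pole `p` taking
`a ↦ 1` and `b ↦ -1`. -/
lemma hasDerivAt_arcsin_unitAffine_inv_sub {p u : ℝ} (hp : p ∉ Icc a b) (hu : u ∈ Ioo a b) :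
    HasDerivAt (fun u => arcsin (unitAffine (b - p)⁻¹ (a - p)⁻¹ (u - p)⁻¹))
      (-(√((a - p) * (b - p)) / (|u - p| * √((u - a) * (b - u))))) u := by
  obtain ⟨hua, hub⟩ := hu
  have hsign : 0 < (u - p) * (a - p) ∧ 0 < (u - p) * (b - p) ∧ 0 < (a - p) * (b - p) := by
    simp only [mem_Icc, not_and_or, not_le] at hp
    rcases hp with hp | hp <;> refine ⟨?_, ?_, ?_⟩ <;> nlinarith
  have hup : u - p ≠ 0 := left_ne_zero_of_mul hsign.1.ne'
  have hap : a - p ≠ 0 := right_ne_zero_of_mul hsign.1.ne'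
  have hbp : b - p ≠ 0 := right_ne_zero_of_mul hsign.2.1.ne'
  have hv : (u - p)⁻¹ ∈ Ioo (b - p)⁻¹ (a - p)⁻¹ := by
    constructor <;> rw [← sub_pos]
    · rw [show (u - p)⁻¹ - (b - p)⁻¹ = (b - u) / ((u - p) * (b - p)) by field_simp; ring]
      exact div_pos (by linarith) hsign.2.1
    · rw [show (a - p)⁻¹ - (u - p)⁻¹ = (u - a) / ((u - p) * (a - p)) by field_simp; ring]
      exact div_pos (by linarith) hsign.1
  have hinv : HasDerivAt (fun u => (u - p)⁻¹) (-1 / (u - p) ^ 2) u :=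
    ((hasDerivAt_id' u).sub_const p).inv hup
  refine ((hasDerivAt_arcsin_unitAffine hv).comp u hinv).congr_deriv ?_
  have hprod : ((u - p)⁻¹ - (b - p)⁻¹) * ((a - p)⁻¹ - (u - p)⁻¹)
      = (u - a) * (b - u) / (|u - p| ^ 2 * ((a - p) * (b - p))) := by
    rw [sq_abs]; field_simp; ring
  have hs : 0 < (u - a) * (b - u) := mul_pos (sub_pos.2 hua) (sub_pos.2 hub)
  rw [hprod, sqrt_div' _ (mul_nonneg (sq_nonneg _) hsign.2.2.le), sqrt_mul' _ hsign.2.2.le,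
    sqrt_sq (abs_nonneg _)]
  have := abs_pos.2 hup
  have := sqrt_pos.2 hs
  have := sqrt_pos.2 hsign.2.2
  field_simp
  rw [sq_abs]

lemma arcsin_unitAffine_inv_sub_left {p : ℝ} (hab : a ≠ b) :
    arcsin (unitAffine (b - p)⁻¹ (a - p)⁻¹ (a - p)⁻¹) = π / 2 := by
  rw [unitAffine_right (by simpa [sub_left_inj] using hab.symm), arcsin_one]

lemma arcsin_unitAffine_inv_sub_right {p : ℝ} (hab : a ≠ b) :
    arcsin (unitAffine (b - p)⁻¹ (a - p)⁻¹ (b - p)⁻¹) = -(π / 2) := by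
  rw [unitAffine_left (by simpa [sub_left_inj] using hab.symm), arcsin_neg_one]

lemma continuousOn_arcsin_unitAffine_inv_sub {p : ℝ} (hp : p ∉ Icc a b) :
    ContinuousOn (fun u => arcsin (unitAffine (b - p)⁻¹ (a - p)⁻¹ (u - p)⁻¹)) (Icc a b) := by
  refine continuous_arcsin_unitAffine.comp_continuousOn
    ((continuousOn_id.sub continuousOn_const).inv₀ ?_)
  intro u hu hup
  rw [Pi.sub_apply, id, sub_eq_zero] at hup
  exact hp (hup ▸ hu)

end UnitAffine

noncomputable def densityPrimitive (a b c u : ℝ) : ℝ :=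
  c * arcsin (unitAffine a b u) + √(a * b) * arcsin (unitAffine b⁻¹ a⁻¹ u⁻¹)
    + √((c - a) * (c - b)) * arcsin (unitAffine (b - c)⁻¹ (a - c)⁻¹ (u - c)⁻¹)

section DensityPrimitive

variable {a b c : ℝ}

lemma hasDerivAt_densityPrimitive (ha : 0 < a) (hbc : b < c) {u : ℝ} (hu : u ∈ Ioo a b) :
    HasDerivAt (densityPrimitive a b c) (c * (√((u - a) * (b - u)) / ((c - u) * u))) u := by
  have h0 := hasDerivAt_arcsin_unitAffine_inv_sub (notMem_Icc_of_lt ha) hu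
  have hc := hasDerivAt_arcsin_unitAffine_inv_sub (notMem_Icc_of_gt hbc) hu
  simp only [sub_zero] at h0
  refine ((((hasDerivAt_arcsin_unitAffine hu).const_mul c).add (h0.const_mul _)).add
    (hc.const_mul _)).congr_deriv ?_
  have hu0 : 0 < u := ha.trans hu.1
  have huc : u - c < 0 := by linarith [hu.2]
  have hs : 0 < (u - a) * (b - u) := mul_pos (sub_pos.2 hu.1) (sub_pos.2 hu.2)
  have hab : √(a * b) ^ 2 = a * b := sq_sqrt (mul_pos ha (ha.trans (hu.1.trans hu.2))).le
  have hcab : √((c - a) * (c - b)) * √((a - c) * (b - c)) = (c - a) * (c - b) := by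
    rw [show (a - c) * (b - c) = (c - a) * (c - b) by ring]
    exact mul_self_sqrt (by nlinarith [hu.1, hu.2])
  have hs2 := sq_sqrt hs.le
  set s := √((u - a) * (b - u))
  have hcu : 0 < c - u := by linarith
  rw [abs_of_pos hu0, abs_of_neg huc, neg_sub]
  field_simp
  rw [hab, mul_assoc u, hcab, div_eq_iff (sqrt_pos.2 hs).ne']
  linear_combination (-c) * hs2

lemma densityPrimitive_sub (hab : a ≠ b) :
    densityPrimitive a b c b - densityPrimitive a b c a
      = π * (c - √(a * b) - √((c - a) * (c - b))) := by
  have h0l := arcsin_unitAffine_inv_sub_left (p := 0) hab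
  have h0r := arcsin_unitAffine_inv_sub_right (p := 0) hab
  simp only [sub_zero] at h0l h0r
  simp only [densityPrimitive, unitAffine_left hab, unitAffine_right hab, arcsin_one,
    arcsin_neg_one, h0l, h0r, arcsin_unitAffine_inv_sub_left hab,
    arcsin_unitAffine_inv_sub_right hab]
  ring

lemma continuousOn_densityPrimitive (ha : 0 < a) (hbc : b < c) :
    ContinuousOn (densityPrimitive a b c) (Icc a b) := by
  have h0 := continuousOn_arcsin_unitAffine_inv_sub (notMem_Icc_of_lt (b := b) ha)
  have hc := continuousOn_arcsin_unitAffine_inv_sub (notMem_Icc_of_gt (b := a) hbc)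
  simp only [sub_zero] at h0
  exact ((continuousOn_const.mul continuous_arcsin_unitAffine.continuousOn).add
    (continuousOn_const.mul h0)).add (continuousOn_const.mul hc)

end DensityPrimitive

lemma continuousOn_sqrt_div_mul {a b c : ℝ} (ha : 0 < a) (hbc : b < c) :
    ContinuousOn (fun u => √((u - a) * (b - u)) / ((c - u) * u)) (Icc a b) := by
  refine ContinuousOn.div (by fun_prop) (by fun_prop) fun u hu => ?_
  exact mul_ne_zero (by linarith [hu.2]) (by linarith [hu.1])

theorem integral_sqrt_div_mul {a b c : ℝ} (ha : 0 < a) (hab : a < b) (hbc : b < c) :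
    ∫ u in a..b, √((u - a) * (b - u)) / ((c - u) * u)
      = π * (c - √(a * b) - √((c - a) * (c - b))) / c := by
  have hc : 0 < c := by linarith
  have hcont := continuousOn_sqrt_div_mul ha hbc
  have hFTC := intervalIntegral.integral_eq_sub_of_hasDerivAt_of_le hab.le
    (continuousOn_densityPrimitive ha hbc) (fun u hu => hasDerivAt_densityPrimitive ha hbc hu)
    ((continuousOn_const.mul hcont).intervalIntegrable_of_Icc hab.le)
  rw [intervalIntegral.integral_const_mul, densityPrimitive_sub hab.ne] at hFTC
  rw [eq_div_iff hc.ne', mul_comm, hFTC]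

theorem integral_sqrt_div_mul_sq {r R c : ℝ} (hr : 0 < r) (hrR : r < R) (hRc : R ^ 2 < c) :
    ∫ x in r..R, √((x ^ 2 - r ^ 2) * (R ^ 2 - x ^ 2)) / ((c - x ^ 2) * x)
      = π * (c - r * R - √((c - r ^ 2) * (c - R ^ 2))) / (2 * c) := by
  set g := fun u => √((u - r ^ 2) * (R ^ 2 - u)) / ((c - u) * u)
  have hsq : r ^ 2 < R ^ 2 := pow_lt_pow_left₀ hrR hr.le two_ne_zero
  have hsubst : ∫ x in r..R, (g ∘ (· ^ 2)) x * (2 * x) = ∫ u in r ^ 2..R ^ 2, g u := by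
    refine intervalIntegral.integral_comp_mul_deriv'
      (fun x _ => by simpa using hasDerivAt_pow 2 x) (by fun_prop)
      ((continuousOn_sqrt_div_mul (pow_pos hr 2) hRc).mono ?_)
    rintro _ ⟨x, hx, rfl⟩
    rw [uIcc_of_le hrR.le] at hx
    exact ⟨pow_le_pow_left₀ hr.le hx.1 2, pow_le_pow_left₀ (hr.le.trans hx.1) hx.2 2⟩
  have hhalf : EqOn (fun x => √((x ^ 2 - r ^ 2) * (R ^ 2 - x ^ 2)) / ((c - x ^ 2) * x))
      (fun x => 1 / 2 * ((g ∘ (· ^ 2)) x * (2 * x))) (uIcc r R) := by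
    intro x hx
    rw [uIcc_of_le hrR.le] at hx
    have : x ≠ 0 := (hr.trans_le hx.1).ne'
    simp only [g, Function.comp]
    field_simp
  rw [intervalIntegral.integral_congr hhalf, intervalIntegral.integral_const_mul, hsubst,
    integral_sqrt_div_mul (pow_pos hr 2) hsq hRc, ← mul_pow,
    sqrt_sq (mul_pos hr (hr.trans hrR)).le]
  ring

theorem rsrb_density_positive_mass (d₁ d₂ : ℝ) (hd₁ : 2 ≤ d₁) (hd₁₂ : d₁ < d₂)
    (D rm rp : ℝ)
    (hD : D = Real.sqrt ((d₁ + d₂ - 2) ^ 2 - (d₂ - d₁) ^ 2))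
    (hrp : rp = Real.sqrt (d₁ + d₂ - 2 + D))
    (hrm : rm = Real.sqrt (d₁ + d₂ - 2 - D)) :
    ∫ x in rm..rp,
        (1 / Real.pi) * (d₁ * d₂ / (d₁ + d₂)) *
          Real.sqrt ((x ^ 2 - rm ^ 2) * (rp ^ 2 - x ^ 2)) / ((d₁ * d₂ - x ^ 2) * x)
      = d₁ / (d₁ + d₂) := by
  set m := (d₁ - 1) * (d₂ - 1)
  have hm : 1 < m := by nlinarith
  have hD2 : D ^ 2 = 4 * m := by rw [hD, sq_sqrt (by nlinarith)]; ring
  have hD0 : 0 < D := by rw [hD]; exact sqrt_pos.2 (by nlinarith)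
  have hDA : D < d₁ + d₂ - 2 := by nlinarith
  have hrm2 : rm ^ 2 = d₁ + d₂ - 2 - D := by rw [hrm, sq_sqrt (by linarith)]
  have hrp2 : rp ^ 2 = d₁ + d₂ - 2 + D := by rw [hrp, sq_sqrt (by linarith)]
  have hrm0 : 0 < rm := by rw [hrm]; exact sqrt_pos.2 (by linarith)
  have hrmp : rm < rp := by rw [hrm, hrp]; exact sqrt_lt_sqrt (by linarith) (by linarith)
  have hrpc : rp ^ 2 < d₁ * d₂ := by nlinarith
  have hprod : rm * rp = d₂ - d₁ := by
    rw [hrm, hrp, ← sqrt_mul (by linarith),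
      show (d₁ + d₂ - 2 - D) * (d₁ + d₂ - 2 + D) = (d₂ - d₁) ^ 2 by linear_combination -hD2,
      sqrt_sq (by linarith)]
  have hsc : √((d₁ * d₂ - rm ^ 2) * (d₁ * d₂ - rp ^ 2)) = d₁ * d₂ - d₁ - d₂ := by
    rw [hrm2, hrp2, show (d₁ * d₂ - (d₁ + d₂ - 2 - D)) * (d₁ * d₂ - (d₁ + d₂ - 2 + D))
      = (d₁ * d₂ - d₁ - d₂) ^ 2 by linear_combination -hD2, sqrt_sq (by nlinarith)]
  simp_rw [mul_div_assoc]
  rw [intervalIntegral.integral_const_mul, integral_sqrt_div_mul_sq hrm0 hrmp hrpc, hprod, hsc]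
  have : 0 < d₁ := by linarith
  have : 0 < d₂ := by linarith
  field_simp
  ring
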